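/- Let k be a field, Q a finite acyclic quiver, and B := MonoidAlgebra k HK(Q). Then the Jacobson radical of B equals the k-linear span of the set { X_{{w}} − X_w : w a list over V }, where for each list w, X_w ∈ B is the corresponding product of generators and X_{{w}} is the idempotent monomial attached to the set of letters of w. -/

import Mathlib

/-- The defining relations of the Hecke–Kiselman monoid of a quiver with
vertex type `V` and arrow relation `arr`. -/
inductive HKRel {V : Type} (arr : V → V → Prop) : FreeMonoid V → FreeMonoid V → Prop
  | idem (t : V) :
      HKRel arr (FreeMonoid.of t * FreeMonoid.of t) (FreeMonoid.of t)
  | braid (s t : V) :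
      HKRel arr (FreeMonoid.of s * FreeMonoid.of t * FreeMonoid.of s)
        (FreeMonoid.of t * FreeMonoid.of s * FreeMonoid.of t)
  | absorb (s t : V) : ¬ arr t s →
      HKRel arr (FreeMonoid.of t * FreeMonoid.of s * FreeMonoid.of t)
        (FreeMonoid.of s * FreeMonoid.of t)

/-- The congruence on the free monoid generated by the Hecke–Kiselman relations. -/
def HKCon {V : Type} (arr : V → V → Prop) : Con (FreeMonoid V) := conGen (HKRel arr)

/-- The Hecke–Kiselman monoid of the quiver `(V, arr)`. -/
abbrev HK {V : Type} (arr : V → V → Prop) : Type := (HKCon arr).Quotient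

/-- The generator of the Hecke–Kiselman monoid attached to the vertex `t`. -/
def HK.x {V : Type} (arr : V → V → Prop) (t : V) : HK arr :=
  (HKCon arr).mk' (FreeMonoid.of t)

/-- The quiver `(V, arr)` is acyclic: the transitive closure of `arr` is irreflexive. -/
def IsAcyclicQuiver {V : Type} (arr : V → V → Prop) : Prop :=
  ∀ v : V, ¬ Relation.TransGen arr v v

/-- The monomial `X_w` in the Hecke–Kiselman monoid attached to a word (list) `w` over `V`. -/
def HK.X {V : Type} (arr : V → V → Prop) (w : List V) : HK arr :=
  (w.map (HK.x arr)).prod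

/-- The set of sinks of the full subquiver on `M`: elements of `M` with no arrow
towards any element of `M`. -/
def sinksOf {V : Type} [DecidableEq V] (arr : V → V → Prop) [DecidableRel arr]
    (M : Finset V) : Finset V :=
  M.filter fun q => ∀ p ∈ M, ¬ arr q p

/-- Auxiliary fuelled recursion computing the idempotent monomial `X_M`: repeatedly
split off the product over the current set of sinks (level `Sk_0`, placed rightmost)
and recurse on the remaining vertices.  Within each sink level the generators pairwise
commute, so the product over an arbitrary enumeration of the level is well defined. -/
noncomputable def XsetAux {V : Type} [DecidableEq V] (arr : V → V → Prop)
    [DecidableRel arr] : ℕ → Finset V → HK arr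
  | 0, _ => 1
  | n + 1, M =>
      XsetAux arr n (M \ sinksOf arr M) *
        (((sinksOf arr M).toList).map (HK.x arr)).prod

/-- The idempotent monomial `X_M ∈ HK(Q)` attached to a subset `M` of the vertices:
the product `(∏_{q ∈ Sk_m(M)} x_q) ⋯ (∏_{q ∈ Sk_0(M)} x_q)` over the sink levels
of `M`, with `X_∅ = 1`. -/
noncomputable def Xset {V : Type} [DecidableEq V] (arr : V → V → Prop)
    [DecidableRel arr] (M : Finset V) : HK arr :=
  XsetAux arr M.card M


/-!
The support `g ↦ {letters of g}` is a homomorphism from `HK(Q)` to the subsets of `V` under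
union; let `φ : k[HK(Q)] → k[(2^V, ∪)]` be the induced algebra map. Every monomial is some `X_w`,
and `X_{{w}}` has the same support as `X_w`, so the span of the `X_{{w}} − X_w` is exactly `ker φ`.

`k[(2^V, ∪)]` is separated by the characters `S ↦ [S ⊆ T]` (Möbius inversion over subsets), and
their pullbacks along `φ` have maximal kernels, so the radical lies in `ker φ`.

Conversely, if `v` is a sink of the support of `a`, then `a = p x_v q` with `v` in neither `p`
nor `q`, and `x_v m x_v = m x_v` for every `m` with support in that of `a`. This makes `HK(Q)`
finite, and by induction on the support some power `a^n` satisfies `b a^n = a^n` whenever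
`supp b ⊆ supp a`. Hence elements of equal support fix the same `u`, and `u = p a u` forces
`a u = u`. So `a − b` strictly lowers `|HK(Q) u|` on every monomial `u` it does not kill, every
element of the left ideal `ker φ` is nilpotent, and `ker φ` lies in the radical.
-/

theorem Ideal.mem_jacobson_bot_of_forall_isNilpotent_mul {R : Type*} [Ring R] {x : R}
    (h : ∀ y, IsNilpotent (y * x)) : x ∈ (⊥ : Ideal R).jacobson := by
  refine Ideal.mem_jacobson_iff.2 fun y => ?_
  obtain ⟨u, hu⟩ := (h y).isUnit_add_one
  refine ⟨↑u⁻¹, ?_⟩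
  rw [Submodule.mem_bot, mul_assoc, ← mul_add_one, ← hu, Units.inv_mul, sub_self]

theorem Ideal.jacobson_bot_le_ker {R K F : Type*} [Ring R] [DivisionRing K] [FunLike F R K]
    [RingHomClass F R K] (f : F) (hf : Function.Surjective f) :
    (⊥ : Ideal R).jacobson ≤ RingHom.ker f :=
  sInf_le ⟨bot_le, RingHom.ker_isMaximal_of_surjective f hf⟩

open Classical in
theorem Finsupp.eq_zero_of_forall_sum_ite_le {α M : Type*} [PartialOrder α] [WellFoundedLT α]
    [AddCommMonoid M] {c : α →₀ M} (h : ∀ t, (c.sum fun s m => if s ≤ t then m else 0) = 0) :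
    c = 0 := by
  ext t
  induction t using WellFoundedLT.induction with
  | _ t ih =>
  rw [Finsupp.coe_zero, Pi.zero_apply, ← h t, Finsupp.sum_eq_single t, if_pos le_rfl]
  · intro s hs hst
    exact if_neg fun hle => hs (ih s (lt_of_le_of_ne hle hst))
  · simp

open Classical in
@[simps]
noncomputable def SetSemiring.subsetChar {V : Type*} (R : Type*) [MulZeroOneClass R]
    (T : Multiplicative (SetSemiring V)) : Multiplicative (SetSemiring V) →* R where
  toFun S := if S ≤ T then 1 else 0
  map_one' := if_pos (Set.empty_subset _)
  map_mul' S S' := by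
    have : S * S' ≤ T ↔ S ≤ T ∧ S' ≤ T := Set.union_subset_iff
    by_cases hS : S ≤ T <;> by_cases hS' : S' ≤ T <;> simp [this, hS, hS']

open Classical in
theorem SetSemiring.eq_zero_of_forall_lift_subsetChar {V R : Type*} [Finite V] [CommSemiring R]
    {y : MonoidAlgebra R (Multiplicative (SetSemiring V))}
    (h : ∀ T, MonoidAlgebra.lift R R _ (subsetChar R T) y = 0) : y = 0 := by
  have : Finite (SetSemiring V) := inferInstanceAs (Finite (Set V))
  refine MonoidAlgebra.coeff_injective <| (Finsupp.eq_zero_of_forall_sum_ite_le fun T => ?_)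
  simpa [MonoidAlgebra.lift_apply] using h T

theorem ncard_range_mul_mul_lt {M : Type*} [Monoid M] [Finite M] {a u : M}
    (hL : ∀ p, p * (a * u) = u → a * u = u) (h : a * u ≠ u) :
    (Set.range (· * (a * u))).ncard < (Set.range (· * u)).ncard := by
  refine Set.ncard_lt_ncard ⟨?_, fun hsub => h ?_⟩
  · rintro _ ⟨p, rfl⟩
    exact ⟨p * a, mul_assoc p a u⟩
  · obtain ⟨p, hp⟩ := hsub ⟨1, one_mul u⟩
    exact hL p hp

theorem MonoidAlgebra.isNilpotent_of_mem_span_sub {M R : Type*} [Monoid M] [Finite M]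
    [CommRing R] (hL : ∀ p a u : M, p * (a * u) = u → a * u = u) {r : M → M → Prop}
    (hr : ∀ a b, r a b → ∀ u, a * u = u ↔ b * u = u) {y : MonoidAlgebra R M}
    (hy : y ∈ Submodule.span R {z | ∃ a b, r a b ∧ z = of R M a - of R M b}) :
    IsNilpotent y := by
  let F (n : ℕ) : Submodule R (MonoidAlgebra R M) :=
    Submodule.span R (of R M '' {u | (Set.range (· * u)).ncard < n})
  have step (n : ℕ) {z} (hz : z ∈ F (n + 1)) : y * z ∈ F n := by
    have hyz := Submodule.mul_mem_mul hy hz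
    rw [Submodule.span_mul_span] at hyz
    refine Submodule.span_le.2 ?_ hyz
    rintro _ ⟨_, ⟨a, b, hab, rfl⟩, _, ⟨u, hu, rfl⟩, rfl⟩
    change (of R M a - of R M b) * of R M u ∈ F n
    rw [sub_mul, ← map_mul, ← map_mul]
    by_cases hau : a * u = u
    · rw [hau, (hr a b hab u).1 hau, sub_self]
      exact zero_mem _
    have hbu : b * u ≠ u := mt (hr a b hab u).2 hau
    have hlt (c : M) (hcu : c * u ≠ u) : (Set.range (· * (c * u))).ncard < n :=
      Nat.lt_of_lt_of_le (ncard_range_mul_mul_lt (hL · c u) hcu) (Nat.lt_succ_iff.1 hu)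
    exact sub_mem (Submodule.subset_span ⟨_, hlt a hau, rfl⟩)
      (Submodule.subset_span ⟨_, hlt b hbu, rfl⟩)
  have pow_mul_mem (m : ℕ) : ∀ n, ∀ z ∈ F (n + m), y ^ m * z ∈ F n := by
    induction m with
    | zero => simp
    | succ m ih =>
      intro n z hz
      rw [pow_succ', mul_assoc]
      exact step n (ih (n + 1) z (by rwa [Nat.add_right_comm, Nat.add_assoc]))
  have hone : (1 : MonoidAlgebra R M) ∈ F (0 + (Nat.card M + 1)) :=
    Submodule.subset_span ⟨1, Nat.lt_succ_of_le (by simp), rfl⟩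
  refine ⟨Nat.card M + 1, ?_⟩
  simpa [F] using pow_mul_mem _ 0 1 hone

theorem IsAcyclicQuiver.exists_sink {V : Type} [Finite V] {arr : V → V → Prop}
    (hQ : IsAcyclicQuiver arr) {M : Set V} (hM : M.Nonempty) : ∃ v ∈ M, ∀ s ∈ M, ¬ arr v s := by
  have : IsTrans V (flip (Relation.TransGen arr)) := ⟨fun _ _ _ h₁ h₂ => h₂.trans h₁⟩
  have : Std.Irrefl (flip (Relation.TransGen arr)) := ⟨hQ⟩
  obtain ⟨v, hv, hmin⟩ :=
    (Finite.wellFounded_of_trans_of_irrefl (flip (Relation.TransGen arr))).has_min M hM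
  exact ⟨v, hv, fun s hs h => hmin s hs (.single h)⟩

namespace HK

section

variable {V : Type} (arr : V → V → Prop)

theorem x_mul_self (t : V) : x arr t * x arr t = x arr t :=
  (Con.eq _).2 (ConGen.Rel.of _ _ (.idem t))

variable {arr} in
theorem x_mul_x_mul_x_of_not_arr {s t : V} (h : ¬ arr t s) :
    x arr t * x arr s * x arr t = x arr s * x arr t :=
  (Con.eq _).2 (ConGen.Rel.of _ _ (.absorb s t h))

theorem X_cons (t : V) (w : List V) : X arr (t :: w) = x arr t * X arr w := by
  simp [X]

theorem exists_X_eq (g : HK arr) : ∃ w, X arr w = g := by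
  obtain ⟨a, rfl⟩ := (HKCon arr).mk'_surjective g
  refine ⟨a.toList, ?_⟩
  induction a using FreeMonoid.inductionOn' with
  | one => rfl
  | of_mul t a ih => rw [FreeMonoid.toList_of_mul, X_cons, ih, map_mul]; rfl

-- `SetSemiring V` is `Set V` with `∪` as addition.
def supportHom : HK arr →* Multiplicative (SetSemiring V) :=
  Con.lift _ (FreeMonoid.lift fun t => .ofAdd (Set.up {t})) <| Con.conGen_le.2 fun a b h => by
    rw [Con.ker_rel]
    cases h <;> simp only [map_mul, FreeMonoid.lift_eval_of, ← ofAdd_add, ← Set.up_union]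
    all_goals congr 2; ext; simp only [Set.mem_union, Set.mem_singleton_iff]; tauto

def support (g : HK arr) : Set V := SetSemiring.down (supportHom arr g).toAdd

theorem support_one : support arr 1 = ∅ := rfl

theorem support_mul (a b : HK arr) : support arr (a * b) = support arr a ∪ support arr b := by
  simp [support]

theorem support_x (t : V) : support arr (x arr t) = {t} := rfl

theorem support_X (w : List V) : support arr (X arr w) = {t | t ∈ w} := by
  induction w with
  | nil => ext; simp [X, support_one]
  | cons t w ih => rw [X_cons, support_mul, support_x, ih]; ext; simp

theorem supportHom_eq_iff {a b : HK arr} :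
    supportHom arr a = supportHom arr b ↔ support arr a = support arr b :=
  (Multiplicative.toAdd.trans SetSemiring.down).injective.eq_iff.symm

theorem mem_closure_x_iff {M : Set V} {g : HK arr} :
    g ∈ Submonoid.closure (x arr '' M) ↔ support arr g ⊆ M := by
  refine ⟨fun hg => ?_, fun hg => ?_⟩
  · induction hg using Submonoid.closure_induction with
    | mem _ h => obtain ⟨t, ht, rfl⟩ := h; simpa [support_x] using ht
    | one => simp [support_one]
    | mul a b _ _ ha hb => rw [support_mul]; exact Set.union_subset ha hb
  · obtain ⟨w, rfl⟩ := exists_X_eq arr g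
    rw [support_X] at hg
    exact Submonoid.list_prod_mem _ fun _ h => by
      obtain ⟨t, ht, rfl⟩ := List.mem_map.1 h
      exact Submonoid.subset_closure ⟨t, hg ht, rfl⟩

theorem eq_one_of_support_subset_empty {g : HK arr} (hg : support arr g ⊆ ∅) : g = 1 := by
  simpa using (mem_closure_x_iff arr).2 hg

variable {arr}

theorem mul_eq_of_forall_x_mul_eq {M : Set V} {b c : HK arr} (hc : ∀ t ∈ M, x arr t * c = c)
    (hb : support arr b ⊆ M) : b * c = c := by
  have hmem := (mem_closure_x_iff arr).2 hb
  clear hb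
  induction hmem using Submonoid.closure_induction with
  | mem _ h => obtain ⟨t, ht, rfl⟩ := h; exact hc t ht
  | one => exact one_mul c
  | mul a b _ _ iha ihb => rw [mul_assoc, ihb, iha]

theorem x_mul_mul_x_of_forall_not_arr {v : V} {m : HK arr}
    (hv : ∀ s ∈ support arr m, ¬ arr v s) : x arr v * m * x arr v = m * x arr v := by
  have hm := (mem_closure_x_iff arr (M := {s | ¬ arr v s})).2 hv
  clear hv
  induction hm using Submonoid.closure_induction with
  | mem _ h => obtain ⟨t, ht, rfl⟩ := h; exact x_mul_x_mul_x_of_not_arr ht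
  | one => simpa using x_mul_self arr v
  | mul a b _ _ iha ihb =>
    calc x arr v * (a * b) * x arr v = (x arr v * a) * (x arr v * b * x arr v) := by
          rw [ihb]; simp only [mul_assoc]
      _ = (x arr v * a * x arr v) * (b * x arr v) := by simp only [mul_assoc]
      _ = a * (x arr v * b * x arr v) := by rw [iha]; simp only [mul_assoc]
      _ = a * b * x arr v := by rw [ihb, mul_assoc]

theorem support_subset_or_eq_mul_x_mul {M : Set V} {v : V} (hv : ∀ s ∈ M, ¬ arr v s)
    {g : HK arr} (hg : support arr g ⊆ M) :
    support arr g ⊆ M \ {v} ∨ ∃ p q, support arr p ⊆ M \ {v} ∧ support arr q ⊆ M \ {v} ∧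
      g = p * x arr v * q := by
  have hmem := (mem_closure_x_iff arr).2 hg
  clear hg
  induction hmem using Submonoid.closure_induction_right with
  | one => exact .inl (by simp [support_one])
  | mul_right g _ _ hy ih =>
    obtain ⟨t, ht, rfl⟩ := hy
    by_cases htv : t = v
    · subst htv
      right
      rcases ih with h | ⟨p, q, hp, hq, rfl⟩
      · exact ⟨g, 1, h, by simp [support_one], (mul_one _).symm⟩
      refine ⟨p * q, 1, support_mul arr p q ▸ Set.union_subset hp hq, by simp [support_one], ?_⟩
      rw [mul_one, mul_assoc p, mul_assoc p,
        x_mul_mul_x_of_forall_not_arr fun s hs => hv s (hq hs).1, mul_assoc]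
    · have hsub : support arr (x arr t) ⊆ M \ {v} := by simpa [support_x] using ⟨ht, htv⟩
      rcases ih with h | ⟨p, q, hp, hq, rfl⟩
      · exact .inl (support_mul arr _ _ ▸ Set.union_subset h hsub)
      · exact .inr ⟨p, q * x arr t, hp, support_mul arr _ _ ▸ Set.union_subset hq hsub,
          by simp only [mul_assoc]⟩

theorem finite_setOf_support_subset [Finite V] (hQ : IsAcyclicQuiver arr) (M : Set V) :
    {g : HK arr | support arr g ⊆ M}.Finite := by
  induction M using WellFoundedLT.induction with
  | _ M ih =>
  rcases M.eq_empty_or_nonempty with rfl | hM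
  · exact (Set.finite_singleton 1).subset fun g hg => eq_one_of_support_subset_empty arr hg
  obtain ⟨v, hvM, hv⟩ := hQ.exists_sink hM
  have hfin := ih (M \ {v}) (Set.sdiff_singleton_ssubset.2 hvM)
  refine (hfin.union (hfin.image2 (fun p q => p * x arr v * q) hfin)).subset fun g hg => ?_
  rcases support_subset_or_eq_mul_x_mul hv hg with h | ⟨p, q, hp, hq, rfl⟩
  exacts [.inl h, .inr ⟨p, hp, q, hq, rfl⟩]

theorem finite [Finite V] (hQ : IsAcyclicQuiver arr) : Finite (HK arr) :=
  Set.finite_univ_iff.1 <| (finite_setOf_support_subset hQ .univ).subset fun _ _ =>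
    Set.subset_univ _

theorem support_pow_subset (g : HK arr) (n : ℕ) : support arr (g ^ n) ⊆ support arr g :=
  (mem_closure_x_iff arr).1 (pow_mem ((mem_closure_x_iff arr).2 subset_rfl) n)

theorem pow_succ_mul_x_mul {p q : HK arr} {v : V} (hv : ∀ s ∈ support arr (q * p), ¬ arr v s)
    (n : ℕ) : (p * x arr v * q) ^ (n + 1) = p * (q * p) ^ n * x arr v * q := by
  induction n with
  | zero => simp
  | succ n ih =>
    calc (p * x arr v * q) ^ (n + 1 + 1)
        = p * (q * p) ^ n * (x arr v * (q * p) * x arr v) * q := by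
          rw [pow_succ, ih]; simp only [mul_assoc]
      _ = p * (q * p) ^ (n + 1) * x arr v * q := by
          rw [x_mul_mul_x_of_forall_not_arr hv, pow_succ]; simp only [mul_assoc]

theorem exists_mul_pow_eq_pow [Finite V] (hQ : IsAcyclicQuiver arr) (a : HK arr) :
    ∃ n, ∀ b, support arr b ⊆ support arr a → b * a ^ n = a ^ n := by
  generalize hM : support arr a = M
  induction M using WellFoundedLT.induction generalizing a with
  | _ M ih =>
  rcases M.eq_empty_or_nonempty with rfl | hne
  · exact ⟨0, fun b hb => by rw [eq_one_of_support_subset_empty arr hb, one_mul]⟩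
  obtain ⟨v, hvM, hv⟩ := hQ.exists_sink hne
  obtain h | ⟨p, q, hp, hq, rfl⟩ := support_subset_or_eq_mul_x_mul hv hM.subset
  · exact absurd (h (hM ▸ hvM)) (by simp)
  have hqp : support arr (q * p) = M \ {v} := by
    refine (support_mul arr q p ▸ Set.union_subset hq hp).antisymm fun s hs => ?_
    rw [← hM, support_mul, support_mul, support_x] at hs
    rw [support_mul]
    grind
  obtain ⟨n, hn⟩ := ih (M \ {v}) (Set.sdiff_singleton_ssubset.2 hvM) (q * p) hqp
  refine ⟨n + 1, fun b hb => ?_⟩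
  rw [pow_succ_mul_x_mul (hqp ▸ fun s hs => hv s hs.1) n, hn p (hqp ▸ hp)]
  refine mul_eq_of_forall_x_mul_eq (fun t ht => ?_) hb
  rw [← mul_assoc, ← mul_assoc]
  by_cases htv : t = v
  · subst htv
    rw [x_mul_mul_x_of_forall_not_arr fun s hs => hv s (hqp ▸ support_pow_subset _ n hs).1]
  · rw [hn (x arr t) (by simpa [support_x, hqp] using ⟨hM ▸ ht, htv⟩)]

theorem mul_eq_self_of_support_subset [Finite V] (hQ : IsAcyclicQuiver arr) {a b u : HK arr}
    (hb : support arr b ⊆ support arr a) (h : a * u = u) : b * u = u := by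
  obtain ⟨n, hn⟩ := exists_mul_pow_eq_pow hQ a
  have hpow : a ^ n * u = u := by
    simpa [Function.IsFixedPt] using Function.IsFixedPt.iterate h n
  rw [← hpow, ← mul_assoc, hn b hb]

theorem mul_eq_self_of_mul_mul_eq_self [Finite V] (hQ : IsAcyclicQuiver arr) {p a u : HK arr}
    (h : p * (a * u) = u) : a * u = u :=
  mul_eq_self_of_support_subset hQ (support_mul arr p a ▸ Set.subset_union_right)
    (by rwa [mul_assoc])

variable [DecidableEq V] [DecidableRel arr]

theorem support_XsetAux [Finite V] (hQ : IsAcyclicQuiver arr) (n : ℕ) (M : Finset V)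
    (hM : M.card ≤ n) : support arr (XsetAux arr n M) = M := by
  induction n generalizing M with
  | zero => simp [Finset.card_eq_zero.1 (Nat.le_zero.1 hM), XsetAux, support_one]
  | succ n ih =>
    have hsub : sinksOf arr M ⊆ M := Finset.filter_subset _ M
    have hcard : (M \ sinksOf arr M).card ≤ n := by
      rcases M.eq_empty_or_nonempty with rfl | hne
      · simp
      obtain ⟨v, hvM, hv⟩ := hQ.exists_sink (Finset.coe_nonempty.2 hne)
      have hsink : (sinksOf arr M).Nonempty := ⟨v, Finset.mem_filter.2 ⟨hvM, hv⟩⟩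
      have := Finset.card_lt_card (Finset.sdiff_ssubset hsub hsink)
      omega
    have hlist : {t | t ∈ (sinksOf arr M).toList} = sinksOf arr M := by ext; simp
    rw [XsetAux, support_mul, ih _ hcard, ← X, support_X, hlist, ← Finset.coe_union,
      Finset.sdiff_union_of_subset hsub]

theorem support_Xset [Finite V] (hQ : IsAcyclicQuiver arr) (M : Finset V) :
    support arr (Xset arr M) = M :=
  support_XsetAux hQ _ M le_rfl

theorem support_Xset_toFinset [Finite V] (hQ : IsAcyclicQuiver arr) (w : List V) :
    support arr (Xset arr w.toFinset) = support arr (X arr w) := by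
  rw [support_Xset hQ, support_X, List.coe_toFinset]

end

section

variable {V : Type} (k : Type) [CommRing k] (arr : V → V → Prop)

noncomputable def supportAlgHom :
    MonoidAlgebra k (HK arr) →ₐ[k] MonoidAlgebra k (Multiplicative (SetSemiring V)) :=
  MonoidAlgebra.mapDomainAlgHom k k (supportHom arr)

theorem supportAlgHom_of (g : HK arr) :
    supportAlgHom k arr (MonoidAlgebra.of k _ g) = MonoidAlgebra.of k _ (supportHom arr g) := by
  simp [supportAlgHom, MonoidAlgebra.of_apply]

def radicalGenerators [DecidableEq V] [DecidableRel arr] : Set (MonoidAlgebra k (HK arr)) :=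
  {b | ∃ w : List V, b = MonoidAlgebra.of k (HK arr) (Xset arr w.toFinset)
    - MonoidAlgebra.of k (HK arr) (X arr w)}

end

section

variable {V : Type} {arr : V → V → Prop}

theorem isNilpotent_of_mem_span_sub [Finite V] (hQ : IsAcyclicQuiver arr) {k : Type}
    [CommRing k] {y : MonoidAlgebra k (HK arr)}
    (hy : y ∈ Submodule.span k {z | ∃ a b : HK arr, support arr a = support arr b ∧
      z = MonoidAlgebra.of k _ a - MonoidAlgebra.of k _ b}) : IsNilpotent y :=
  have := finite hQ
  MonoidAlgebra.isNilpotent_of_mem_span_sub (fun _ _ _ => mul_eq_self_of_mul_mul_eq_self hQ)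
    (fun _ _ h _ => ⟨mul_eq_self_of_support_subset hQ h.ge, mul_eq_self_of_support_subset hQ h.le⟩)
    hy

variable [DecidableEq V] [DecidableRel arr]

theorem mem_span_radicalGenerators_iff (k : Type) [CommRing k] [Finite V]
    (hQ : IsAcyclicQuiver arr) {y : MonoidAlgebra k (HK arr)} :
    y ∈ Submodule.span k (radicalGenerators k arr) ↔ supportAlgHom k arr y = 0 := by
  refine ⟨fun hy => ?_, fun hy => ?_⟩
  · refine (Submodule.span_le (p := LinearMap.ker (supportAlgHom k arr).toLinearMap)).2 ?_ hy
    rintro _ ⟨w, rfl⟩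
    rw [SetLike.mem_coe, LinearMap.mem_ker, AlgHom.toLinearMap_apply, map_sub, supportAlgHom_of,
      supportAlgHom_of, (supportHom_eq_iff arr).2 (support_Xset_toFinset hQ w), sub_self]
  let rep (S : Multiplicative (SetSemiring V)) : HK arr :=
    Xset arr (Set.toFinite (SetSemiring.down S.toAdd)).toFinset
  have key (z : MonoidAlgebra k (HK arr)) :
      z - MonoidAlgebra.mapDomain rep (supportAlgHom k arr z) ∈
        Submodule.span k (radicalGenerators k arr) := by
    induction z using MonoidAlgebra.induction_linear with
    | zero => simp
    | add z z' hz hz' =>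
      rw [map_add, MonoidAlgebra.mapDomain_add, add_sub_add_comm]
      exact add_mem hz hz'
    | single g c =>
      obtain ⟨w, rfl⟩ := exists_X_eq arr g
      have hrep : rep (supportHom arr (X arr w)) = Xset arr w.toFinset := by
        change Xset arr (Set.toFinite (support arr (X arr w))).toFinset = _
        congr 1
        ext t
        simp [support_X]
      have hsub : MonoidAlgebra.single (X arr w) c - MonoidAlgebra.single (Xset arr w.toFinset) c =
          (-c) • (MonoidAlgebra.of k _ (Xset arr w.toFinset) - MonoidAlgebra.of k _ (X arr w)) := by
        simp [MonoidAlgebra.of_apply, smul_sub]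
        abel
      rw [supportAlgHom, MonoidAlgebra.mapDomainAlgHom_apply, MonoidAlgebra.mapDomain_single,
        MonoidAlgebra.mapDomain_single, hrep, hsub]
      exact Submodule.smul_mem _ _ (Submodule.subset_span ⟨w, rfl⟩)
  simpa [hy] using key y

theorem jacobson_bot_eq_ker_supportAlgHom (k : Type) [Field k] [Finite V]
    (hQ : IsAcyclicQuiver arr) :
    (⊥ : Ideal (MonoidAlgebra k (HK arr))).jacobson = RingHom.ker (supportAlgHom k arr) := by
  refine le_antisymm (fun x hx => ?_) fun x hx => ?_
  · refine SetSemiring.eq_zero_of_forall_lift_subsetChar fun T => ?_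
    let ε := (MonoidAlgebra.lift k k _ (SetSemiring.subsetChar k T)).comp (supportAlgHom k arr)
    exact Ideal.jacobson_bot_le_ker ε (fun c => ⟨algebraMap k _ c, ε.commutes c⟩) hx
  · refine Ideal.mem_jacobson_bot_of_forall_isNilpotent_mul fun y => ?_
    have hyx := (mem_span_radicalGenerators_iff k hQ).2 (Ideal.mul_mem_left _ y hx)
    refine isNilpotent_of_mem_span_sub hQ (Submodule.span_mono ?_ hyx)
    rintro _ ⟨w, rfl⟩
    exact ⟨_, _, support_Xset_toFinset hQ w, rfl⟩

end

end HK

/-- For a field `k` and a finite acyclic quiver `Q`, the Jacobson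
radical of `B = MonoidAlgebra k (HK Q)` equals the `k`-linear span of the elements
`X_{{w}} − X_w` for words `w` over the vertices. -/
theorem hk_jacobson_radical (k V : Type) [Field k] [Fintype V] [DecidableEq V]
    (arr : V → V → Prop) [DecidableRel arr] (hQ : IsAcyclicQuiver arr) :
    ((⊥ : Ideal (MonoidAlgebra k (HK arr))).jacobson : Set (MonoidAlgebra k (HK arr))) =
    (Submodule.span k {b : MonoidAlgebra k (HK arr) | ∃ w : List V,
        b = MonoidAlgebra.of k (HK arr) (Xset arr w.toFinset)
          - MonoidAlgebra.of k (HK arr) (HK.X arr w)} : Set (MonoidAlgebra k (HK arr))) := by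
  ext y
  rw [SetLike.mem_coe, SetLike.mem_coe, HK.jacobson_bot_eq_ker_supportAlgHom k hQ,
    RingHom.mem_ker]
  exact (HK.mem_span_radicalGenerators_iff k hQ).symm
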